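/- For any complex vector a of length L and a random vector φ with independent Rademacher entries, E[|⟨a,φ⟩|⁴] ≤ 3‖a‖₂⁴ − 2‖a‖₄⁴. -/

import Mathlib

/-!
Peel off one coordinate at a time. Averaging over the sign of the new coordinate `c`, the
parallelogram law gives `E‖T ± c‖² = E‖T‖² + ‖c‖²`, and expanding
`‖T ± c‖² = ‖T‖² + ‖c‖² ± 2⟪T, c⟫` together with Cauchy–Schwarz gives
`E‖T ± c‖⁴ ≤ E‖T‖⁴ + 6‖c‖² E‖T‖² + ‖c‖⁴`. Writing `A = Σ‖cᵢ‖²` and `B = Σ‖cᵢ‖⁴`, the bound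
`3A² − 2B` is exactly the quantity that grows by `6‖c‖²A + ‖c‖⁴` under this recursion.
-/

open Complex Finset

/-- Rademacher sign vector from a boolean vector. -/
noncomputable def rademacherSign {L : ℕ} (s : Fin L → Bool) (i : Fin L) : ℝ :=
  if s i then 1 else -1

/-- Expectation over iid uniform Rademacher vectors, modeled as the average over
all `2^L` sign patterns. -/
noncomputable def rademacherExp (L : ℕ) (f : (Fin L → ℝ) → ℝ) : ℝ :=
  (1 / 2 ^ L : ℝ) * ∑ s : Fin L → Bool, f (rademacherSign s)

section RealInnerProductSpace

variable {E : Type*} [NormedAddCommGroup E] [InnerProductSpace ℝ E]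

theorem norm_add_pow_four_add_norm_sub_pow_four_le (x y : E) :
    ‖x + y‖ ^ 4 + ‖x - y‖ ^ 4 ≤ 2 * ‖x‖ ^ 4 + 12 * ‖x‖ ^ 2 * ‖y‖ ^ 2 + 2 * ‖y‖ ^ 4 := by
  have hcs : |inner ℝ x y| ≤ ‖x‖ * ‖y‖ := abs_real_inner_le_norm x y
  have hsq : inner ℝ x y ^ 2 ≤ (‖x‖ * ‖y‖) ^ 2 := sq_le_sq' (abs_le.mp hcs).1 (abs_le.mp hcs).2
  calc ‖x + y‖ ^ 4 + ‖x - y‖ ^ 4 = (‖x + y‖ ^ 2) ^ 2 + (‖x - y‖ ^ 2) ^ 2 := by ring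
    _ = 2 * (‖x‖ ^ 2 + ‖y‖ ^ 2) ^ 2 + 8 * inner ℝ x y ^ 2 := by
      rw [norm_add_sq_real, norm_sub_sq_real]; ring
    _ ≤ 2 * ‖x‖ ^ 4 + 12 * ‖x‖ ^ 2 * ‖y‖ ^ 2 + 2 * ‖y‖ ^ 4 := by nlinarith

end RealInnerProductSpace

section RademacherExp

variable {n : ℕ}

theorem rademacherExp_add (f g : (Fin n → ℝ) → ℝ) :
    rademacherExp n (fun φ => f φ + g φ) = rademacherExp n f + rademacherExp n g := by
  simp only [rademacherExp, sum_add_distrib, mul_add]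

theorem rademacherExp_const_mul (r : ℝ) (f : (Fin n → ℝ) → ℝ) :
    rademacherExp n (fun φ => r * f φ) = r * rademacherExp n f := by
  simp only [rademacherExp, ← mul_sum]; ring

theorem rademacherExp_const (r : ℝ) : rademacherExp n (fun _ => r) = r := by
  simp [rademacherExp]

theorem rademacherExp_mono {f g : (Fin n → ℝ) → ℝ} (h : ∀ φ, f φ ≤ g φ) :
    rademacherExp n f ≤ rademacherExp n g :=
  mul_le_mul_of_nonneg_left (sum_le_sum fun s _ => h _) (by positivity)

theorem rademacherSign_cons (b : Bool) (t : Fin n → Bool) :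
    rademacherSign (Fin.cons b t : Fin (n + 1) → Bool)
      = Fin.cons (if b then 1 else -1) (rademacherSign t) := by
  ext i
  cases i using Fin.cases <;> rfl

theorem rademacherExp_succ (f : (Fin (n + 1) → ℝ) → ℝ) :
    rademacherExp (n + 1) f
      = rademacherExp n (fun φ => (f (Fin.cons 1 φ) + f (Fin.cons (-1) φ)) / 2) := by
  rw [rademacherExp, rademacherExp, ← (Fin.consEquiv fun _ => Bool).sum_comp,
    Fintype.sum_prod_type, Fintype.sum_bool, ← sum_div, sum_add_distrib]
  simp only [Fin.consEquiv, Equiv.coe_fn_mk, rademacherSign_cons, if_true, Bool.false_eq_true,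
    if_false]
  rw [pow_succ]; ring

end RademacherExp

section RademacherSum

variable {E : Type*} [NormedAddCommGroup E] [InnerProductSpace ℝ E] {n : ℕ}

theorem sum_cons_smul (r : ℝ) (φ : Fin n → ℝ) (c : Fin (n + 1) → E) :
    ∑ i, (Fin.cons r φ : Fin (n + 1) → ℝ) i • c i = r • c 0 + ∑ i, φ i • c i.succ := by
  simp [Fin.sum_univ_succ]

theorem rademacherExp_norm_sum_smul_sq (c : Fin n → E) :
    rademacherExp n (fun φ => ‖∑ i, φ i • c i‖ ^ 2) = ∑ i, ‖c i‖ ^ 2 := by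
  induction n with
  | zero => simp [rademacherExp]
  | succ n ih =>
    have hpar (T : E) : (‖(1 : ℝ) • c 0 + T‖ ^ 2 + ‖(-1 : ℝ) • c 0 + T‖ ^ 2) / 2
        = ‖T‖ ^ 2 + ‖c 0‖ ^ 2 := by
      rw [one_smul, neg_one_smul, neg_add_eq_sub, add_comm (c 0), parallelogram_law_with_norm ℝ]
      ring
    rw [rademacherExp_succ]
    simp only [sum_cons_smul, hpar]
    rw [rademacherExp_add, rademacherExp_const, ih, Fin.sum_univ_succ, add_comm]

theorem rademacherExp_norm_sum_smul_pow_four_le (c : Fin n → E) :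
    rademacherExp n (fun φ => ‖∑ i, φ i • c i‖ ^ 4)
      ≤ 3 * (∑ i, ‖c i‖ ^ 2) ^ 2 - 2 * ∑ i, ‖c i‖ ^ 4 := by
  induction n with
  | zero => simp [rademacherExp]
  | succ n ih =>
    have hpt (T : E) : (‖(1 : ℝ) • c 0 + T‖ ^ 4 + ‖(-1 : ℝ) • c 0 + T‖ ^ 4) / 2
        ≤ ‖T‖ ^ 4 + 6 * ‖c 0‖ ^ 2 * ‖T‖ ^ 2 + ‖c 0‖ ^ 4 := by
      have := norm_add_pow_four_add_norm_sub_pow_four_le T (c 0)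
      rw [one_smul, neg_one_smul, neg_add_eq_sub, add_comm (c 0)]
      linarith
    have hsq := rademacherExp_norm_sum_smul_sq fun i => c i.succ
    calc rademacherExp (n + 1) (fun φ => ‖∑ i, φ i • c i‖ ^ 4)
        ≤ rademacherExp n (fun φ => ‖∑ i, φ i • c i.succ‖ ^ 4
            + 6 * ‖c 0‖ ^ 2 * ‖∑ i, φ i • c i.succ‖ ^ 2 + ‖c 0‖ ^ 4) := by
          rw [rademacherExp_succ]
          refine rademacherExp_mono fun φ => ?_
          simp only [sum_cons_smul]
          exact hpt _
      _ ≤ 3 * (∑ i, ‖c i‖ ^ 2) ^ 2 - 2 * ∑ i, ‖c i‖ ^ 4 := by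
          simp only [rademacherExp_add, rademacherExp_const_mul, rademacherExp_const, hsq,
            Fin.sum_univ_succ]
          nlinarith [ih fun i => c i.succ]

end RademacherSum

/-- For a complex vector `a` and an iid Rademacher vector `φ`,
`E[|⟨a,φ⟩|⁴] ≤ 3‖a‖₂⁴ − 2‖a‖₄⁴`. -/
theorem rademacher_fourth_moment (L : ℕ) (a : Fin L → ℂ) :
    rademacherExp L (fun φ => ‖∑ i, (starRingEnd ℂ) (a i) * (φ i : ℂ)‖ ^ 4)
      ≤ 3 * (∑ i, ‖a i‖ ^ 2) ^ 2 - 2 * ∑ i, ‖a i‖ ^ 4 := by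
  have h := rademacherExp_norm_sum_smul_pow_four_le fun i => (starRingEnd ℂ) (a i)
  simp only [Complex.norm_conj, Complex.real_smul] at h
  simpa only [mul_comm] using h
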